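/- arXiv:2209.12718 — 3 statements merged into one kernel-verified Lean document; each statement's English description precedes it below -/
import Mathlib

section
/- Let R be a Noetherian local ring and M a finitely generated R-module with finite projective dimension n. Then Ext_R^n(M, R) ≠ 0. -/
/-!
Take a free `n`-th syzygy with `n` minimal. If `n = 0`, then `M` is free and nonzero, so it has a
nonzero linear form and `Ext⁰(M, R) = Hom(M, R) ≠ 0`. If `n = m + 1`, the last step of the chain is
`0 → K → F → N → 0` with `N` an `m`-th syzygy and `K` finite free (`R` is Noetherian). Splicing
projective resolutions shifts dimension, `Ext^{m+1}(M, R) ≅ Ext¹(N, R)`, and if this vanishes every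
linear form on `K` extends to `F`; extending the coordinate forms of a basis of `K` gives a
retraction `F → K`. Then `N` is a direct summand of `F`, hence a finite projective module over a
local ring, hence free, contradicting the minimality of `n`.
-/

open CategoryTheory

/-- The `i`-th Ext group of `R`-modules `M` and `N`. -/
noncomputable abbrev ExtGroup (R : Type) [CommRing R] (M N : ModuleCat.{0} R) (i : ℕ) : Type :=
  (((Ext R (ModuleCat.{0} R) i).obj (Opposite.op M)).obj N)

/-- `IsSyzygyOf R n K M`: `K` is an `n`-th syzygy of `M` in a resolution of `M` by
finitely generated free `R`-modules. -/
inductive IsSyzygyOf (R : Type) [CommRing R] : ℕ → ModuleCat.{0} R → ModuleCat.{0} R → Prop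
  | zero (M : ModuleCat.{0} R) : IsSyzygyOf R 0 M M
  | succ {n : ℕ} {K N M : ModuleCat.{0} R} (F : ModuleCat.{0} R)
      (hfree : Module.Free R F) (hfin : Module.Finite R F)
      (f : K →ₗ[R] F) (g : F →ₗ[R] N)
      (hf : Function.Injective f) (hg : Function.Surjective g)
      (hfg : LinearMap.range f = LinearMap.ker g)
      (hN : IsSyzygyOf R n N M) : IsSyzygyOf R (n + 1) K M

/-- A finitely generated module over a Noetherian local ring has projective dimension
at most `n` iff some `n`-th syzygy of it (in a finite free resolution) is free. -/
def ProjDimLE (R : Type) [CommRing R] (n : ℕ) (M : ModuleCat.{0} R) : Prop :=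
  ∃ K : ModuleCat.{0} R, IsSyzygyOf R n K M ∧ Module.Free R K

universe u

open Limits HomologicalComplex Opposite

namespace CategoryTheory.ProjectiveResolution

variable {C : Type*} [Category C] [Abelian C]

noncomputable def augmentation {Z : C} (P : ProjectiveResolution Z) : P.complex.X 0 ⟶ Z :=
  P.π.f 0

instance {Z : C} (P : ProjectiveResolution Z) : Epi P.augmentation :=
  inferInstanceAs (Epi (P.π.f 0))

@[simp]
lemma d_comp_augmentation {Z : C} (P : ProjectiveResolution Z) :
    P.complex.d 1 0 ≫ P.augmentation = 0 :=
  P.complex_d_comp_π_f_zero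

@[simp]
lemma d_comp_augmentation_assoc {Z W : C} (P : ProjectiveResolution Z) (f : Z ⟶ W) :
    P.complex.d 1 0 ≫ P.augmentation ≫ f = 0 := by
  rw [← Category.assoc, d_comp_augmentation, zero_comp]

variable (S : ShortComplex C) (P : ProjectiveResolution S.X₁)

noncomputable def spliceComplex : ChainComplex C ℕ :=
  P.complex.augment (P.augmentation ≫ S.f) (by simp)

noncomputable def spliceπ : spliceComplex S P ⟶ (ChainComplex.single₀ C).obj S.X₃ :=
  (ChainComplex.toSingle₀Equiv _ _).symm ⟨S.g, show (P.augmentation ≫ S.f) ≫ S.g = 0 by simp⟩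

lemma spliceπ_f_zero : (spliceπ S P).f 0 = S.g :=
  ChainComplex.toSingle₀Equiv_symm_apply_f_zero _ _

variable {S}

lemma quasiIso_spliceπ (hS : S.ShortExact) : QuasiIso (spliceπ S P) := ⟨fun
  | 0 => by
    rw [ChainComplex.quasiIsoAt₀_iff, ShortComplex.quasiIso_iff_of_zeros' _ rfl rfl rfl]
    simp only [shortComplexFunctor'_map_τ₂, spliceπ_f_zero]
    refine ⟨?_, hS.epi_g⟩
    exact (ShortComplex.exact_iff_of_epi_of_isIso_of_mono
      (S₁ := ShortComplex.mk (P.augmentation ≫ S.f) S.g (by simp)) (S₂ := S)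
      { τ₁ := P.augmentation, τ₂ := 𝟙 S.X₂, τ₃ := 𝟙 S.X₃ }).2 hS.exact
  | 1 => by
    have := hS.mono_f
    rw [quasiIsoAt_iff_exactAt' _ _ (ChainComplex.exactAt_succ_single_obj _ _),
      exactAt_iff' _ 2 1 0 (by simp) (by simp)]
    exact (ShortComplex.exact_iff_of_epi_of_isIso_of_mono
      (S₁ := ShortComplex.mk (P.complex.d 1 0) P.augmentation (by simp))
      (S₂ := ShortComplex.mk (P.complex.d 1 0) (P.augmentation ≫ S.f) (by simp))
      { τ₁ := 𝟙 _, τ₂ := 𝟙 _, τ₃ := S.f }).1 P.exact₀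
  | n + 2 => by
    rw [quasiIsoAt_iff_exactAt' _ _ (ChainComplex.exactAt_succ_single_obj _ _),
      exactAt_iff' _ (n + 3) (n + 2) (n + 1) (by simp) (by simp)]
    exact P.exact_succ n⟩

noncomputable def ofShortExact (hS : S.ShortExact) [Projective S.X₂] :
    ProjectiveResolution S.X₃ where
  complex := spliceComplex S P
  projective
    | 0 => ‹Projective S.X₂›
    | n + 1 => P.projective n
  π := spliceπ S P
  quasiIso := quasiIso_spliceπ P hS

lemma self_ofShortExact_d_one_zero (hS : S.ShortExact) [Projective S.X₁] [Projective S.X₂] :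
    ((self S.X₁).ofShortExact hS).complex.d 1 0 = S.f :=
  Category.id_comp S.f

end CategoryTheory.ProjectiveResolution

section Linear

variable {R : Type*} [Ring R] {C : Type*} [Category C] [Abelian C] [Linear R C]

namespace ChainComplex

noncomputable def augmentLinearYonedaObjHomologyIso (K : ChainComplex C ℕ) {X : C}
    (f : K.X 0 ⟶ X) (w : K.d 1 0 ≫ f = 0) (Y : C) (j : ℕ) :
    ((K.augment f w).linearYonedaObj R Y).homology (j + 2) ≅
      (K.linearYonedaObj R Y).homology (j + 1) :=
  homologyIsoSc' _ (j + 1) (j + 2) (j + 3) (by simp) (by simp) ≪≫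
    ShortComplex.homologyMapIso
      (ShortComplex.isoMk (Iso.refl _) (Iso.refl _) (Iso.refl _) (by ext; rfl) (by ext; rfl)) ≪≫
    (homologyIsoSc' (K.linearYonedaObj R Y) j (j + 1) (j + 2) (by simp) (by simp)).symm

lemma exists_d_comp_eq_of_isZero_linearYonedaObj_homology (K : ChainComplex C ℕ)
    (Y : C) {i j k : ℕ} (hi : (ComplexShape.up ℕ).prev j = i) (hk : (ComplexShape.up ℕ).next j = k)
    (hK : IsZero (K.X k)) (h : IsZero ((K.linearYonedaObj R Y).homology j)) (φ : K.X j ⟶ Y) :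
    ∃ ψ : K.X i ⟶ Y, K.d j i ≫ ψ = φ := by
  rw [← exactAt_iff_isZero_homology, exactAt_iff' _ i j k hi hk,
    ShortComplex.moduleCat_exact_iff] at h
  exact h φ (hK.eq_of_src _ _)

end ChainComplex

variable [EnoughProjectives C]

lemma eq_zero_of_isZero_ext_zero {X Y : C} [Projective X]
    (h : IsZero (((Ext R C 0).obj (op X)).obj Y)) (φ : X ⟶ Y) : φ = 0 := by
  let P := ProjectiveResolution.self X
  obtain ⟨ψ, rfl⟩ := P.complex.exists_d_comp_eq_of_isZero_linearYonedaObj_homology Y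
    (i := 0) (k := 1) (by simp) (by simp) (isZero_single_obj_X _ _ _ _ (by simp))
    (h.of_iso (P.isoExt 0 Y).symm) φ
  exact zero_comp

namespace CategoryTheory.ShortComplex.ShortExact

variable {S : ShortComplex C} (hS : S.ShortExact) [Projective S.X₂]
include hS

noncomputable def extSuccSuccIso (Y : C) (i : ℕ) :
    ((Ext R C (i + 2)).obj (Opposite.op S.X₃)).obj Y ≅
      ((Ext R C (i + 1)).obj (Opposite.op S.X₁)).obj Y :=
  let P := ProjectiveResolution.of S.X₁
  (P.ofShortExact hS).isoExt (i + 2) Y ≪≫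
    P.complex.augmentLinearYonedaObjHomologyIso _ (by simp) Y i ≪≫ (P.isoExt (i + 1) Y).symm

lemma exists_f_comp_eq_of_isZero_ext_one [Projective S.X₁] {Y : C}
    (h : IsZero (((Ext R C 1).obj (Opposite.op S.X₃)).obj Y)) (φ : S.X₁ ⟶ Y) :
    ∃ ψ : S.X₂ ⟶ Y, S.f ≫ ψ = φ := by
  let Q := (ProjectiveResolution.self S.X₁).ofShortExact hS
  obtain ⟨ψ, hψ⟩ := Q.complex.exists_d_comp_eq_of_isZero_linearYonedaObj_homology Y
    (i := 0) (k := 2) (by simp) (by simp) (isZero_single_obj_X (.down ℕ) 0 S.X₁ 1 (by simp))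
    (h.of_iso (Q.isoExt 1 Y).symm) φ
  rw [ProjectiveResolution.self_ofShortExact_d_one_zero] at hψ
  exact ⟨ψ, hψ⟩

end CategoryTheory.ShortComplex.ShortExact

end Linear

section Module

open Module

lemma LinearMap.exists_leftInverse_of_forall_dual_extends {R K F : Type*} [CommSemiring R]
    [AddCommMonoid K] [Module R K] [AddCommMonoid F] [Module R F] [Module.Free R K]
    [Module.Finite R K]
    (f : K →ₗ[R] F) (h : ∀ φ : Dual R K, ∃ ψ : Dual R F, ψ ∘ₗ f = φ) :
    ∃ r : F →ₗ[R] K, r ∘ₗ f = LinearMap.id := by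
  let b := Free.chooseBasis R K
  choose ψ hψ using fun i => h (b.coord i)
  refine ⟨b.equivFun.symm.toLinearMap ∘ₗ LinearMap.pi ψ, LinearMap.ext fun k => ?_⟩
  have hcoord : (fun i => ψ i (f k)) = b.equivFun k := funext fun i => by
    simpa using LinearMap.congr_fun (hψ i) k
  change b.equivFun.symm (fun i => ψ i (f k)) = k
  rw [hcoord, LinearEquiv.symm_apply_apply]

lemma Module.free_of_exact_of_leftInverse {R K F N : Type*} [CommRing R] [IsLocalRing R]
    [AddCommGroup K] [Module R K] [AddCommGroup F] [Module R F] [AddCommGroup N] [Module R N]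
    [Module.Projective R F] [Module.Finite R F] {f : K →ₗ[R] F} {g : F →ₗ[R] N}
    (hfg : Function.Exact f g) (hg : Function.Surjective g) {r : F →ₗ[R] K}
    (hr : r ∘ₗ f = LinearMap.id) : Module.Free R N := by
  have hsplit := (Function.Exact.split_tfae' hfg).out 1 0
  obtain ⟨-, s, hs⟩ := hsplit.1 ⟨hg, r, hr⟩
  have : Module.Projective R N := .of_split s g hs
  have : Module.Finite R N := .of_surjective g hg
  exact free_of_flat_of_isLocalRing

lemma Function.Exact.moduleCat_shortExact {R : Type*} [Ring R] {K F N : ModuleCat R}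
    {f : K →ₗ[R] F} {g : F →ₗ[R] N} (hfg : Function.Exact f g) (hf : Function.Injective f)
    (hg : Function.Surjective g) :
    (ModuleCat.shortComplexOfCompEqZero f g hfg.linearMap_comp_eq_zero).ShortExact :=
  ModuleCat.shortComplex_shortExact _ hfg hf hg

lemma ModuleCat.free_of_isZero_ext_one {R : Type u} [CommRing R] [IsLocalRing R]
    {K F N : ModuleCat.{u} R} [Module.Free R K] [Module.Finite R K]
    [Module.Free R F] [Module.Finite R F] {f : K →ₗ[R] F} {g : F →ₗ[R] N}
    (hfg : Function.Exact f g) (hf : Function.Injective f) (hg : Function.Surjective g)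
    (h : IsZero (((Ext R (ModuleCat R) 1).obj (op N)).obj (ModuleCat.of R R))) :
    Module.Free R N := by
  have hS := hfg.moduleCat_shortExact hf hg
  have hext (φ : Dual R K) : ∃ ψ : Dual R F, ψ ∘ₗ f = φ := by
    obtain ⟨ψ, hψ⟩ := hS.exists_f_comp_eq_of_isZero_ext_one h (ModuleCat.ofHom φ)
    exact ⟨ψ.hom, congrArg ModuleCat.Hom.hom hψ⟩
  obtain ⟨r, hr⟩ := f.exists_leftInverse_of_forall_dual_extends hext
  exact free_of_exact_of_leftInverse hfg hg hr

end Module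

lemma IsSyzygyOf.isZero_ext_succ_iff {R : Type} [CommRing R] {m : ℕ} {N M : ModuleCat.{0} R}
    (h : IsSyzygyOf R m N M) (i : ℕ) (Y : ModuleCat.{0} R) :
    IsZero (((Ext R (ModuleCat.{0} R) (m + i + 1)).obj (op M)).obj Y) ↔
      IsZero (((Ext R (ModuleCat.{0} R) (i + 1)).obj (op N)).obj Y) := by
  induction h generalizing i with
  | zero => rw [zero_add]
  | @succ m K N M F hfree _ f g hf hg hfg _ ih =>
    have hS := (LinearMap.exact_iff.2 hfg.symm).moduleCat_shortExact hf hg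
    rw [show m + 1 + i + 1 = m + (i + 1) + 1 by ring, ih]
    exact (hS.extSuccSuccIso Y i).isZero_iff

theorem stmt_0_general (R : Type) [CommRing R] [IsNoetherianRing R] [IsLocalRing R]
    (M : ModuleCat.{0} R) (hM : Nontrivial M) (n : ℕ)
    (hpd : ProjDimLE R n M) (hmin : ∀ m : ℕ, ProjDimLE R m M → n ≤ m) :
    ¬ Subsingleton (ExtGroup R M (ModuleCat.of R R) n) := by
  intro hsub
  have hzero : IsZero (((Ext R (ModuleCat.{0} R) n).obj (op M)).obj (ModuleCat.of R R)) :=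
    ModuleCat.isZero_of_subsingleton _
  obtain ⟨K, hK, hKfree⟩ := hpd
  cases hK with
  | zero =>
    obtain ⟨x, hx⟩ := exists_ne (0 : M)
    obtain ⟨φ, hφ⟩ := Module.Projective.exists_dual_ne_zero R hx
    exact hφ (congrArg (fun ψ => ψ.hom x) (eq_zero_of_isZero_ext_zero hzero (ModuleCat.ofHom φ)))
  | @succ m _ N _ F hFfree hFfin f g hf hg hfg hN =>
    have hN1 := (hN.isZero_ext_succ_iff 0 _).1 hzero
    have : Module.Finite R K := .of_injective f hf
    have hNfree := ModuleCat.free_of_isZero_ext_one (LinearMap.exact_iff.2 hfg.symm) hf hg hN1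
    have := hmin m ⟨N, hN, hNfree⟩
    omega

/-- If `M` is a nonzero finitely generated module over a Noetherian local ring `R`
with finite projective dimension `n`, then `Ext_R^n(M, R) ≠ 0`. -/
theorem stmt_0 (R : Type) [CommRing R] [IsNoetherianRing R] [IsLocalRing R]
    (M : ModuleCat.{0} R) (hM : Nontrivial M) (hfg : Module.Finite R M) (n : ℕ)
    (hpd : ProjDimLE R n M) (hmin : ∀ m : ℕ, ProjDimLE R m M → n ≤ m) :
    ¬ Subsingleton (ExtGroup R M (ModuleCat.of R R) n) :=
  stmt_0_general R M hM n hpd hmin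
end

section
/- Let R be a Noetherian local ring satisfying the condition: for every finitely generated R-module M, if Ext_R^i(M, M ⊕ R) = 0 for all i sufficiently large, then pd_R M < ∞. Then for every finitely generated R-module M, the equality pd_R M = sup { i ∈ ℤ : Ext_R^i(M, M ⊕ R) ≠ 0 } holds. -/
open CategoryTheory

/-- The projective dimension of `M`, as an element of `ℕ∞` (`⊤` if infinite). -/
noncomputable def projDim (R : Type) [CommRing R] (M : ModuleCat.{0} R) : ℕ∞ :=
  sInf {n : ℕ∞ | ∃ k : ℕ, n = k ∧ ProjDimLE R k M}

/-!
If `pd M = p < ∞`, then `Ext^i(M, -)` vanishes above `p` by dimension shifting along a finite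
free resolution. Conversely `Ext^p(M, R) ≠ 0` when `p > 0`: write `0 → K → F → N → 0` with
`K` the free `p`-th syzygy and `N` the `(p-1)`-st one. If `Ext^p(M, R) = Ext^1(N, R)`
vanished, every linear form on `K` would extend to `F`, so `K → F` would split and `N` would
be a finite projective, hence free, module over the local ring `R`, i.e. `pd M ≤ p - 1`.
As `R` is a retract of `M ⊕ R`, also `Ext^p(M, M ⊕ R) ≠ 0`. If `pd M = ∞`, the hypothesis
on `R` says precisely that `Ext^i(M, M ⊕ R) ≠ 0` for arbitrarily large `i`.
-/

open Limits

section SplitExactSequences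

variable {R : Type*} [CommRing R] {K F N : Type*} [AddCommGroup K] [Module R K]
  [AddCommGroup F] [Module R F] [AddCommGroup N] [Module R N]

lemma Module.Finite.of_injective_of_free [Nontrivial R] [Module.Free R K] [Module.Finite R F]
    (f : K →ₗ[R] F) (hf : Function.Injective f) : Module.Finite R K :=
  let b := Module.Free.chooseBasis R K
  have : Finite (Module.Free.ChooseBasisIndex R K) :=
    (b.linearIndependent.map' f (LinearMap.ker_eq_bot.2 hf)).finite
  .of_basis b

lemma LinearMap.exists_leftInverse_of_surjective_dualMap [Module.Free R K] [Module.Finite R K]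
    (f : K →ₗ[R] F) (hf : Function.Surjective f.dualMap) :
    ∃ σ : F →ₗ[R] K, σ ∘ₗ f = LinearMap.id := by
  let b := Module.Free.chooseBasis R K
  choose ψ hψ using fun j => hf (b.coord j)
  refine ⟨b.equivFun.symm.toLinearMap ∘ₗ LinearMap.pi ψ, ?_⟩
  ext k
  have hcoord : (fun j => ψ j (f k)) = b.equivFun k := funext fun j => by
    rw [← LinearMap.dualMap_apply, hψ, Module.Basis.coord_apply, Module.Basis.equivFun_apply]
  exact (congrArg b.equivFun.symm hcoord).trans (b.equivFun.symm_apply_apply k)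

lemma Module.Projective.of_exact_of_surjective_dualMap [Module.Free R K] [Module.Finite R K]
    [Module.Projective R F] {f : K →ₗ[R] F} {g : F →ₗ[R] N} (hfg : Function.Exact f g)
    (hf : Function.Injective f) (hg : Function.Surjective g)
    (hdual : Function.Surjective f.dualMap) : Module.Projective R N := by
  obtain ⟨l, hl⟩ :=
    ((hfg.split_tfae hf hg).out 1 0).1 (f.exists_leftInverse_of_surjective_dualMap hdual)
  exact .of_split l g hl

end SplitExactSequences

section ExtViaResolution

variable {R : Type} [CommRing R]

lemma subsingleton_ExtGroup_succ_iff {K : ModuleCat.{0} R} (P : ProjectiveResolution K)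
    (Y : ModuleCat.{0} R) (m : ℕ) :
    Subsingleton (ExtGroup R K Y (m + 1)) ↔
      ∀ φ : P.complex.X (m + 1) ⟶ Y, P.complex.d (m + 2) (m + 1) ≫ φ = 0 →
        ∃ ψ : P.complex.X m ⟶ Y, P.complex.d (m + 1) m ≫ ψ = φ := by
  have e := P.isoExt (m + 1) Y ≪≫
    (P.complex.linearYonedaObj R Y).homologyIsoSc' m (m + 1) (m + 2) (by simp) (by simp)
  rw [← ModuleCat.isZero_iff_subsingleton, e.isZero_iff,
    ← ShortComplex.exact_iff_isZero_homology, ShortComplex.moduleCat_exact_iff]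
  rfl

lemma subsingleton_ExtGroup_of_retract {M Y Z : ModuleCat.{0} R} (i : Y ⟶ Z) (r : Z ⟶ Y)
    (hir : i ≫ r = 𝟙 Y) (n : ℕ) (hZ : Subsingleton (ExtGroup R M Z n)) :
    Subsingleton (ExtGroup R M Y n) := by
  let E := (Ext R (ModuleCat.{0} R) n).obj (Opposite.op M)
  have hinv : Function.LeftInverse (E.map r) (E.map i) := fun x => by
    rw [← ConcreteCategory.comp_apply, ← E.map_comp, hir, E.map_id, ConcreteCategory.id_apply]
  exact hinv.injective.subsingleton

end ExtViaResolution

lemma ModuleCat.comp_eq_zero_of_range_eq_ker {R : Type} [CommRing R]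
    {K F N : ModuleCat.{0} R} {f : K ⟶ F} {g : F ⟶ N}
    (hfg : LinearMap.range f.hom = LinearMap.ker g.hom) : f ≫ g = 0 := by
  ext x
  exact (hfg ▸ LinearMap.mem_range_self f.hom x : f x ∈ LinearMap.ker g.hom)

namespace CategoryTheory.ProjectiveResolution

variable {R : Type} [CommRing R] {K F N : ModuleCat.{0} R}

variable (P : ProjectiveResolution K) (f : K ⟶ F) (g : F ⟶ N)

lemma d_comp_π_f_zero_comp : P.complex.d 1 0 ≫ P.π.f 0 ≫ f = 0 :=
  (P.complex_d_comp_π_f_zero_assoc f).trans zero_comp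

lemma π_f_zero_comp_comp_eq_zero {f : K ⟶ F} {g : F ⟶ N}
    (hfg : LinearMap.range f.hom = LinearMap.ker g.hom) : (P.π.f 0 ≫ f) ≫ g = 0 :=
  (Category.assoc _ _ _).trans <|
    (P.π.f 0 ≫= ModuleCat.comp_eq_zero_of_range_eq_ker hfg).trans comp_zero

variable [Projective F] (hf : Function.Injective f) (hg : Function.Surjective g)
  (hfg : LinearMap.range f.hom = LinearMap.ker g.hom)

noncomputable def splice : ProjectiveResolution N where
  complex := P.complex.augment (P.π.f 0 ≫ f) (P.d_comp_π_f_zero_comp f)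
  projective
    | 0 => inferInstanceAs (Projective F)
    | n + 1 => P.projective n
  π := (ChainComplex.toSingle₀Equiv _ N).symm ⟨g, P.π_f_zero_comp_comp_eq_zero hfg⟩
  quasiIso := ⟨fun n => by
    have hπ : Function.Surjective (P.π.f 0) := (ModuleCat.epi_iff_surjective _).1 inferInstance
    cases n with
    | zero =>
      rw [ChainComplex.quasiIsoAt₀_iff, ShortComplex.quasiIso_iff_of_zeros' _ rfl rfl rfl]
      refine (ShortComplex.exact_and_epi_g_iff_of_iso
        (S₂ := ShortComplex.mk _ g (P.π_f_zero_comp_comp_eq_zero hfg)) ?_).2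
        ⟨?_, (ModuleCat.epi_iff_surjective _).2 hg⟩
      · exact ShortComplex.isoMk (Iso.refl _) (Iso.refl _)
          (HomologicalComplex.singleObjXSelf (ComplexShape.down ℕ) 0 N).symm
          ((Category.id_comp _).trans (Category.comp_id _).symm)
          ((Category.id_comp _).trans ((ChainComplex.toSingle₀Equiv_symm_apply_f_zero
            (C := P.complex.augment _ _) (X := N) g _).symm.trans (Category.comp_id _).symm))
      · rw [ShortComplex.moduleCat_exact_iff]
        intro x hx
        obtain ⟨k, rfl⟩ : x ∈ LinearMap.range f.hom := hfg ▸ hx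
        obtain ⟨y, rfl⟩ := hπ k
        exact ⟨y, rfl⟩
    | succ n =>
      rw [quasiIsoAt_iff_exactAt' (hL := ChainComplex.exactAt_succ_single_obj ..),
        HomologicalComplex.exactAt_iff' _ (n + 2) (n + 1) n (by simp) (by simp)]
      cases n with
      | zero =>
        rw [ShortComplex.moduleCat_exact_iff]
        intro x hx
        exact (ShortComplex.moduleCat_exact_iff _).1 P.exact₀ x (hf (hx.trans (map_zero _).symm))
      | succ n => exact P.exact_succ n⟩

end CategoryTheory.ProjectiveResolution

section DimensionShifting

variable {R : Type} [CommRing R] {K F N : ModuleCat.{0} R} [Projective F] {f : K ⟶ F}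
  {g : F ⟶ N} (hf : Function.Injective f) (hg : Function.Surjective g)
  (hfg : LinearMap.range f.hom = LinearMap.ker g.hom)
include hf hg hfg

lemma subsingleton_ExtGroup_add_two_iff (Y : ModuleCat.{0} R) (m : ℕ) :
    Subsingleton (ExtGroup R N Y (m + 2)) ↔ Subsingleton (ExtGroup R K Y (m + 1)) := by
  let P := ProjectiveResolution.of K
  rw [subsingleton_ExtGroup_succ_iff (P.splice f g hf hg hfg) Y (m + 1),
    subsingleton_ExtGroup_succ_iff P Y m]
  rfl

lemma exists_comp_eq_of_subsingleton_ExtGroup_one {Y : ModuleCat.{0} R}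
    (hY : Subsingleton (ExtGroup R N Y 1)) (φ : K ⟶ Y) : ∃ θ : F ⟶ Y, f ≫ θ = φ := by
  let P := ProjectiveResolution.of K
  obtain ⟨θ, hθ⟩ := (subsingleton_ExtGroup_succ_iff (P.splice f g hf hg hfg) Y 0).1 hY
    (P.π.f 0 ≫ φ) (P.d_comp_π_f_zero_comp φ)
  exact ⟨θ, (cancel_epi (P.π.f 0)).1 ((Category.assoc _ _ _).symm.trans hθ)⟩

end DimensionShifting

section ProjectiveDimension

variable {R : Type} [CommRing R]

lemma IsSyzygyOf.subsingleton_ExtGroup_iff {n : ℕ} {K M : ModuleCat.{0} R}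
    (h : IsSyzygyOf R n K M) (Y : ModuleCat.{0} R) (m : ℕ) :
    Subsingleton (ExtGroup R M Y (n + m + 1)) ↔ Subsingleton (ExtGroup R K Y (m + 1)) := by
  induction h generalizing m with
  | zero => rw [Nat.zero_add]
  | @succ n K N M F _ _ f g hf hg hfg _ ih =>
    rw [show n + 1 + m + 1 = n + (m + 1) + 1 by omega, ih]
    exact subsingleton_ExtGroup_add_two_iff (f := ModuleCat.ofHom f) (g := ModuleCat.ofHom g)
      hf hg hfg Y m

lemma ProjDimLE.subsingleton_ExtGroup {p : ℕ} {M : ModuleCat.{0} R} (h : ProjDimLE R p M)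
    (Y : ModuleCat.{0} R) {i : ℕ} (hi : p < i) : Subsingleton (ExtGroup R M Y i) := by
  obtain ⟨K, hK, _⟩ := h
  obtain ⟨m, rfl⟩ := Nat.exists_eq_add_of_lt hi
  rw [hK.subsingleton_ExtGroup_iff, ← ModuleCat.isZero_iff_subsingleton]
  exact isZero_Ext_succ_of_projective K Y m

lemma ProjDimLE.of_succ_of_subsingleton_ExtGroup [IsLocalRing R] {p : ℕ} {M : ModuleCat.{0} R}
    (h : ProjDimLE R (p + 1) M) (hExt : Subsingleton (ExtGroup R M (ModuleCat.of R R) (p + 1))) :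
    ProjDimLE R p M := by
  obtain ⟨K, hK, _⟩ := h
  cases hK with
  | @succ _ _ N _ F _ _ f g hf hg hfg hN =>
    refine ⟨N, hN, ?_⟩
    have : Module.Finite R K := .of_injective_of_free f hf
    have hdual : Function.Surjective f.dualMap := fun φ => by
      obtain ⟨θ, hθ⟩ := exists_comp_eq_of_subsingleton_ExtGroup_one (f := ModuleCat.ofHom f)
        (g := ModuleCat.ofHom g) hf hg hfg ((hN.subsingleton_ExtGroup_iff _ 0).1 hExt)
        (ModuleCat.ofHom φ)
      exact ⟨θ.hom, congrArg ModuleCat.Hom.hom hθ⟩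
    have : Module.Projective R N :=
      .of_exact_of_surjective_dualMap (LinearMap.exact_iff.2 hfg.symm) hf hg hdual
    have : Module.Finite R N := .of_surjective g hg
    exact Module.free_of_flat_of_isLocalRing

lemma ProjDimLE.not_subsingleton_ExtGroup [IsLocalRing R] {p : ℕ} {M : ModuleCat.{0} R}
    (h : ProjDimLE R (p + 1) M) (hp : ¬ ProjDimLE R p M) :
    ¬ Subsingleton (ExtGroup R M (ModuleCat.of R (M × R)) (p + 1)) := fun hExt =>
  hp <| h.of_succ_of_subsingleton_ExtGroup <| subsingleton_ExtGroup_of_retract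
    (ModuleCat.ofHom (LinearMap.inr R M R)) (ModuleCat.ofHom (LinearMap.snd R M R))
    (by ext; simp) _ hExt

lemma projDim_eq_of_projDimLE {p : ℕ} {M : ModuleCat.{0} R} (h : ProjDimLE R p M)
    (hmin : ∀ k, ProjDimLE R k M → p ≤ k) : projDim R M = p :=
  le_antisymm (sInf_le ⟨p, rfl, h⟩)
    (le_sInf fun _ ⟨k, hk, hkM⟩ => hk ▸ by exact_mod_cast hmin k hkM)

lemma projDim_eq_top {M : ModuleCat.{0} R} (h : ∀ n, ¬ ProjDimLE R n M) : projDim R M = ⊤ := by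
  rw [projDim, sInf_eq_top]
  rintro _ ⟨k, -, hk⟩
  exact (h k hk).elim

end ProjectiveDimension

theorem stmt_1_general (R : Type) [CommRing R] [IsLocalRing R]
    (hGARC : ∀ M : ModuleCat.{0} R, Module.Finite R M →
      (∃ N : ℕ, ∀ i : ℕ, N < i →
        Subsingleton (ExtGroup R M (ModuleCat.of R (M × R)) i)) →
      ∃ n : ℕ, ProjDimLE R n M) :
    ∀ M : ModuleCat.{0} R, Module.Finite R M →
      projDim R M = sSup {n : ℕ∞ | ∃ i : ℕ, n = i ∧
        ¬ Subsingleton (ExtGroup R M (ModuleCat.of R (M × R)) i)} := by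
  intro M hM
  classical
  by_cases hfin : ∃ n, ProjDimLE R n M
  · have hp := Nat.find_spec hfin
    rw [projDim_eq_of_projDimLE hp fun k => Nat.find_min' hfin]
    refine le_antisymm ?_ (sSup_le ?_)
    · cases hq : Nat.find hfin with
      | zero => simp
      | succ q =>
        have hq' : ¬ ProjDimLE R q M := Nat.find_min hfin (by omega)
        exact le_sSup ⟨q + 1, rfl, (hq ▸ hp).not_subsingleton_ExtGroup hq'⟩
    · rintro _ ⟨i, rfl, hi⟩
      by_contra! hlt
      exact hi (hp.subsingleton_ExtGroup _ (by exact_mod_cast hlt))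
  · push Not at hfin
    rw [projDim_eq_top hfin, eq_comm, sSup_eq_top]
    intro b hb
    lift b to ℕ using hb.ne
    obtain ⟨i, hbi, hi⟩ :
        ∃ i, b < i ∧ ¬ Subsingleton (ExtGroup R M (ModuleCat.of R (M × R)) i) := by
      by_contra! hsub
      obtain ⟨n, hn⟩ := hGARC M hM ⟨b, hsub⟩
      exact hfin n hn
    exact ⟨i, ⟨i, rfl, hi⟩, by exact_mod_cast hbi⟩

/-- If the Noetherian local ring `R` satisfies (GARC), then for every finitely generated
`R`-module `M` one has `pd_R M = sup { i | Ext_R^i(M, M ⊕ R) ≠ 0 }`. -/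
theorem stmt_1 (R : Type) [CommRing R] [IsNoetherianRing R] [IsLocalRing R]
    (hGARC : ∀ M : ModuleCat.{0} R, Module.Finite R M →
      (∃ N : ℕ, ∀ i : ℕ, N < i →
        Subsingleton (ExtGroup R M (ModuleCat.of R (M × R)) i)) →
      ∃ n : ℕ, ProjDimLE R n M) :
    ∀ M : ModuleCat.{0} R, Module.Finite R M →
      projDim R M = sSup {n : ℕ∞ | ∃ i : ℕ, n = i ∧
        ¬ Subsingleton (ExtGroup R M (ModuleCat.of R (M × R)) i)} :=
  stmt_1_general R hGARC
end

section
/- Let R be a Cohen–Macaulay local ring and I an Ulrich ideal with reduction Q (a parameter ideal with I² = QI) such that μ(I) − dim R ≥ 1. Then I/Q is a free R/I-module of rank μ(I) − dim R. -/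
open CategoryTheory

/-- The quotient module `A/B` for submodules `B ≤ A` of `R`. -/
abbrev subQuot (R : Type) [CommRing R] {A B : Submodule R R} (h : B ≤ A) : Type :=
  (↥A) ⧸ LinearMap.range (Submodule.inclusion h)

/-!
Write `F = I/I² ≅ (R/I)^r` and `k = R/𝔪`. By Nakayama, `r = μ(I)`. The images of `q₁, …, qₙ`
in `I/𝔪I = F ⊗ k` are linearly independent: a relation with a unit coefficient puts some `qᵢ`
into `J + 𝔪I`, where `J` is generated by the other `qⱼ`; then `I² = QI ⊆ J + 𝔪I²`, so `I² ⊆ J`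
by Nakayama, and `qᵢ² ∈ J` contradicts the regularity of `qᵢ` modulo `J` (regular sequences may
be permuted in a Noetherian local ring). So the images of the `qᵢ` in the free `R/I`-module `F`
extend to a basis — lift a complementary basis of `k^μ(I)`; a generating family of `(R/I)^μ(I)`
with `μ(I)` members is a basis — and `F / (Q/I²) ≅ (R/I)^(μ(I) - n)`. Since `I² = QI ⊆ Q`, that
quotient is `I/Q`.
-/

open RingTheory.Sequence IsLocalRing Submodule

section RegularSequence

variable {R : Type*} [CommRing R]

theorem Ideal.eq_top_of_isSMulRegular_of_mul_self_mem {J : Ideal R} {x : R}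
    (hx : IsSMulRegular (R ⧸ J • (⊤ : Submodule R R)) x) (hxx : x * x ∈ J) : J = ⊤ := by
  rw [smul_eq_mul, Ideal.mul_top] at hx
  have hx0 : Ideal.Quotient.mk J x = 0 := hx <| show x • _ = x • 0 by
    rwa [smul_zero, Algebra.smul_def, Ideal.Quotient.algebraMap_eq, ← map_mul,
      Ideal.Quotient.eq_zero_iff_mem]
  have h10 : Ideal.Quotient.mk J 1 = 0 := hx <| show x • _ = x • 0 by
    rwa [smul_zero, Algebra.smul_def, Ideal.Quotient.algebraMap_eq, ← map_mul, mul_one]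
  exact (Ideal.eq_top_iff_one J).2 (Ideal.Quotient.eq_zero_iff_mem.1 h10)

variable [IsLocalRing R] [IsNoetherianRing R] {n : ℕ} {q : Fin n → R}

theorem RingTheory.Sequence.IsRegular.mul_self_notMem_span_compl
    (hreg : IsRegular R (List.ofFn q)) (i : Fin n) : q i * q i ∉ Ideal.span (q '' {i}ᶜ) := by
  set l := ((List.finRange n).erase i).map q
  have hperm : (List.ofFn q).Perm (l ++ [q i]) := by
    rw [List.ofFn_eq_map, ← List.map_singleton, ← List.map_append]
    exact ((List.perm_cons_erase (List.mem_finRange i)).trans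
      (List.perm_append_singleton _ _).symm).map q
  have hl : Ideal.ofList l = Ideal.span (q '' {i}ᶜ) := by
    refine congrArg Ideal.span (Set.ext fun x => ?_)
    simp [l, (List.nodup_finRange n).mem_erase_iff, and_comm]
  have hreg' := IsLocalRing.isRegular_of_perm hreg hperm
  have hx := ((isWeaklyRegular_append_iff R l [q i]).1 hreg'.toIsWeaklyRegular).2
  rw [isWeaklyRegular_singleton_iff, hl] at hx
  intro hqq
  refine hreg'.top_ne_smul ?_
  rw [Ideal.ofList_append, hl, Ideal.eq_top_of_isSMulRegular_of_mul_self_mem hx hqq, top_sup_eq,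
    top_smul]

theorem RingTheory.Sequence.IsRegular.mem_maximalIdeal_of_sum_mul_mem
    (hreg : IsRegular R (List.ofFn q)) {I : Ideal R} (hQI : Ideal.span (Set.range q) ≤ I)
    (hred : I ^ 2 ≤ Ideal.span (Set.range q) * I) {b : Fin n → R}
    (hb : ∑ j, b j * q j ∈ maximalIdeal R * I) (i : Fin n) : b i ∈ maximalIdeal R := by
  by_contra hbi
  set J := Ideal.span (q '' {i}ᶜ)
  have hqJ : ∀ j ≠ i, q j ∈ J := fun j hj => Ideal.subset_span ⟨j, hj, rfl⟩
  have hqi : q i ∈ J ⊔ maximalIdeal R * I := by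
    have hrest : ∑ j ∈ Finset.univ.erase i, b j * q j ∈ J :=
      Ideal.sum_mem _ fun j hj => J.mul_mem_left _ (hqJ j (Finset.ne_of_mem_erase hj))
    rw [← Finset.add_sum_erase _ _ (Finset.mem_univ i)] at hb
    rw [← Ideal.unit_mul_mem_iff_mem _ (notMem_maximalIdeal.1 hbi)]
    simpa only [add_sub_cancel_right] using
      sub_mem (Ideal.mem_sup_right hb) (Ideal.mem_sup_left hrest)
  have hQ : Ideal.span (Set.range q) ≤ J ⊔ maximalIdeal R * I := by
    rw [Ideal.span_le]
    rintro _ ⟨j, rfl⟩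
    by_cases hj : j = i
    · exact hj ▸ hqi
    · exact Ideal.mem_sup_left (hqJ j hj)
  have hI2 : I ^ 2 ≤ J ⊔ maximalIdeal R • I ^ 2 :=
    calc I ^ 2 ≤ Ideal.span (Set.range q) * I := hred
      _ ≤ (J ⊔ maximalIdeal R * I) * I := Ideal.mul_mono_left hQ
      _ = J * I ⊔ maximalIdeal R • I ^ 2 := by rw [Ideal.sup_mul, smul_eq_mul, sq, mul_assoc]
      _ ≤ J ⊔ maximalIdeal R • I ^ 2 := sup_le_sup_right Ideal.mul_le_left _
  have hI2J : I ^ 2 ≤ J := le_of_le_smul_of_le_jacobson_bot (IsNoetherian.noetherian _)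
    (maximalIdeal_le_jacobson ⊥) hI2
  have hqI : q i ∈ I := hQI (Ideal.subset_span ⟨i, rfl⟩)
  exact hreg.mul_self_notMem_span_compl i (hI2J (by rw [sq]; exact Ideal.mul_mem_mul hqI hqI))

end RegularSequence

section Modules

variable {R : Type*} [CommRing R] {M N : Type*} [AddCommGroup M] [Module R M]
  [AddCommGroup N] [Module R N]

theorem Ideal.smul_top_eq_comap_subtype_sq (I : Ideal R) :
    I • (⊤ : Submodule R I) = Submodule.comap I.subtype (I ^ 2) := by
  ext x
  rw [mem_smul_top_iff, Submodule.mem_comap, smul_eq_mul, sq]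
  rfl

theorem Submodule.mem_smul_top_pi {ι : Type*} [Finite ι] {L : Ideal R} {z : ι → N}
    (hz : ∀ i, z i ∈ L • (⊤ : Submodule R N)) : z ∈ L • (⊤ : Submodule R (ι → N)) := by
  classical
  cases nonempty_fintype ι
  rw [← Finset.univ_sum_single z]
  refine sum_mem fun i _ => ?_
  have := mem_map_of_mem (f := LinearMap.single R (fun _ => N) i) (hz i)
  rw [map_smul''] at this
  exact smul_mono_right L (le_top : map _ ⊤ ≤ ⊤) this

theorem Submodule.span_range_single_one_quotient (J : Ideal R) (ι : Type*) [Finite ι]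
    [DecidableEq ι] : span R (Set.range fun i : ι => Pi.single i (1 : R ⧸ J)) = ⊤ := by
  rw [← restrictScalars_span R (R ⧸ J) Ideal.Quotient.mk_surjective, restrictScalars_eq_top_iff]
  have := (Pi.basisFun (R ⧸ J) ι).span_eq
  rwa [funext (Pi.basisFun_apply (R ⧸ J) ι)] at this

theorem Submodule.range_inclusion_span {ι : Type*} {p : Submodule R M} {y : ι → M}
    (h : span R (Set.range y) ≤ p) :
    LinearMap.range (inclusion h) =
      span R (Set.range fun i => (⟨y i, h (subset_span ⟨i, rfl⟩)⟩ : p)) := by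
  rw [range_inclusion, ← comap_map_eq_of_injective p.injective_subtype (span R _), map_span,
    ← Set.range_comp]
  rfl

theorem Submodule.nonempty_quotient_span_equiv_quotient_span {A : Type*} [CommRing A]
    [Algebra R A] [Module A N] [IsScalarTower R A N] (hA : Function.Surjective (algebraMap R A))
    {ρ : M →ₗ[R] N} (hρ : Function.Surjective ρ) {ι : Type*} {y : ι → M}
    (hker : LinearMap.ker ρ ≤ span R (Set.range y)) :
    Nonempty ((M ⧸ span R (Set.range y)) ≃ₗ[R] N ⧸ span A (Set.range fun i => ρ (y i))) := by
  set φ := ((span A (Set.range fun i => ρ (y i))).restrictScalars R).mkQ ∘ₗ ρ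
  have hφ : LinearMap.ker φ = span R (Set.range y) := by
    rw [LinearMap.ker_comp, ker_mkQ, restrictScalars_span R A hA, Set.range_comp', ← map_span,
      comap_map_eq, sup_eq_left.2 hker]
  exact ⟨(quotEquivOfEq _ _ hφ.symm).trans
    ((φ.quotKerEquivOfSurjective ((mkQ_surjective _).comp hρ)).trans
      (Quotient.restrictScalarsEquiv R _))⟩

end Modules

section SurjectionOntoQuotientPi

variable {R : Type*} [CommRing R] {M : Type*} [AddCommGroup M] [Module R M]
  {J : Ideal R} {r : ℕ} {ρ : M →ₗ[R] (Fin r → R ⧸ J)}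

theorem LinearMap.exists_span_eq_top_of_surjective [Module.Finite R M]
    (hJ : J ≤ Ideal.jacobson ⊥) (hρ : Function.Surjective ρ) (hker : ker ρ ≤ J • ⊤) :
    ∃ y : Fin r → M, span R (Set.range y) = ⊤ := by
  choose y hy using fun i => hρ (Pi.single i 1)
  refine ⟨y, top_le_iff.1 (le_of_le_smul_of_le_jacobson_bot Module.Finite.fg_top hJ ?_)⟩
  calc ⊤ ≤ span R (Set.range y) ⊔ ker ρ := by
        rw [← LinearMap.map_le_map_iff, Submodule.map_top, range_eq_top.2 hρ, map_span,
          ← Set.range_comp, Function.comp_def, funext hy, span_range_single_one_quotient]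
    _ ≤ span R (Set.range y) ⊔ J • ⊤ := sup_le_sup_left hker _

theorem LinearMap.le_of_surjective_of_span_eq_top [Nontrivial (R ⧸ J)]
    (hρ : Function.Surjective ρ) {k : ℕ} {y : Fin k → M} (hy : span R (Set.range y) = ⊤) :
    r ≤ k := by
  have hspan : span (R ⧸ J) (Set.range (ρ ∘ y)) = ⊤ := by
    rw [← restrictScalars_eq_top_iff R,
      restrictScalars_span R (R ⧸ J) Ideal.Quotient.mk_surjective, Set.range_comp, ← map_span,
      hy, Submodule.map_top, range_eq_top.2 hρ]
  simpa using finrank_le_of_span_eq_top hspan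

theorem LinearMap.linearIndependent_factor_comp {L : Ideal R} [L.IsMaximal] (hJL : J ≤ L)
    (hρ : Function.Surjective ρ) (hker : ker ρ ≤ L • ⊤) {n : ℕ} {y : Fin n → M}
    (hy : ∀ b : Fin n → R, ∑ i, b i • y i ∈ L • (⊤ : Submodule R M) → ∀ i, b i ∈ L) :
    LinearIndependent (R ⧸ L) fun i => Ideal.Quotient.factor hJL ∘ ρ (y i) := by
  set σ := (Ideal.Quotient.factorₐ R hJL).toLinearMap.compLeft (Fin r) ∘ₗ ρ
  have hσ : ker σ ≤ L • ⊤ := by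
    intro x hx
    have hρx : ρ x ∈ L • (⊤ : Submodule R (Fin r → R ⧸ J)) := mem_smul_top_pi fun j => by
      obtain ⟨a, ha⟩ := Ideal.Quotient.mk_surjective (ρ x j)
      have haL : Ideal.Quotient.factor hJL (Ideal.Quotient.mk J a) = 0 := ha ▸ congrFun hx j
      rw [← ha, ← Ideal.Quotient.algebraMap_eq, Algebra.algebraMap_eq_smul_one]
      exact smul_mem_smul (Ideal.Quotient.eq_zero_iff_mem.1 haL) mem_top
    have : x ∈ comap ρ (map ρ (L • ⊤)) := by
      rwa [map_smul'', Submodule.map_top, range_eq_top.2 hρ]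
    rwa [comap_map_eq, sup_eq_left.2 hker] at this
  rw [Fintype.linearIndependent_iff]
  intro c hc i
  choose b hb using fun i => Ideal.Quotient.mk_surjective (c i)
  rw [← hb i, Ideal.Quotient.eq_zero_iff_mem]
  refine hy b (hσ ?_) i
  have : ∑ i, b i • (Ideal.Quotient.factor hJL ∘ ρ (y i)) = 0 := by
    simpa [← hb, ← Ideal.Quotient.algebraMap_eq, algebraMap_smul] using hc
  rwa [mem_ker, map_sum, Finset.sum_congr rfl fun i _ => map_smul σ (b i) (y i)]

end SurjectionOntoQuotientPi

theorem Ideal.sInf_card_span_eq_of_surjective {R : Type*} [CommRing R] [IsNoetherianRing R]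
    {I : Ideal R} [Nontrivial (R ⧸ I)] (hI : I ≤ Ideal.jacobson ⊥) {r : ℕ}
    {ρ : I →ₗ[R] (Fin r → R ⧸ I)} (hρ : Function.Surjective ρ) (hker : LinearMap.ker ρ ≤ I • ⊤) :
    sInf {k : ℕ | ∃ g : Fin k → R, Ideal.span (Set.range g) = I} = r := by
  obtain ⟨y, hy⟩ := ρ.exists_span_eq_top_of_surjective hI hρ hker
  have hyI : ∃ g : Fin r → R, Ideal.span (Set.range g) = I :=
    ⟨_, (span_range_subtype_eq_top_iff I fun i => (y i).2).1 hy⟩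
  refine le_antisymm (Nat.sInf_le hyI) (le_csInf ⟨r, hyI⟩ ?_)
  rintro k ⟨g, hg⟩
  have hgI : ∀ i, g i ∈ I := fun i => hg ▸ Ideal.subset_span ⟨i, rfl⟩
  exact ρ.le_of_surjective_of_span_eq_top hρ ((span_range_subtype_eq_top_iff I hgI).2 hg)

theorem nonempty_quotient_span_equiv_of_span_sumElim_eq_top {A : Type*} [CommRing A]
    {n m c : ℕ} (hc : n + m = c) {v : Fin n → Fin c → A} {w : Fin m → Fin c → A}
    (hvw : span A (Set.range (Sum.elim v w)) = ⊤) :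
    Nonempty (((Fin c → A) ⧸ span A (Set.range v)) ≃ₗ[A] (Fin m → A)) := by
  set T := (Fintype.linearCombination A v).coprod (Fintype.linearCombination A w)
  have hT : Function.Surjective T := by
    rwa [← LinearMap.range_eq_top, LinearMap.range_coprod, Fintype.range_linearCombination,
      Fintype.range_linearCombination, ← span_union, ← Set.Sum.elim_range]
  have e : ((Fin n → A) × (Fin m → A)) ≃ₗ[A] (Fin c → A) :=
    (LinearEquiv.sumArrowLequivProdArrow _ _ A A).symm.trans
      (LinearEquiv.funCongrLeft A A (finSumFinEquiv.trans (finCongr hc)).symm)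
  set E := LinearEquiv.ofBijective T
    ⟨OrzechProperty.injective_of_surjective_of_injective e.toLinearMap T e.injective hT, hT⟩
  have hE : (LinearMap.ker (LinearMap.snd A (Fin n → A) (Fin m → A))).map E.toLinearMap =
      span A (Set.range v) := by
    rw [LinearMap.ker_snd, ← LinearMap.range_comp, show E.toLinearMap = T from rfl,
      LinearMap.coprod_inl, Fintype.range_linearCombination]
  exact ⟨(Quotient.equiv _ _ E hE).symm.trans
    (LinearMap.quotKerEquivOfSurjective _ LinearMap.snd_surjective)⟩

section LocalRing

variable {A K : Type*} [CommRing A] [IsLocalRing A] [Field K] {π : A →+* K}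

theorem IsLocalRing.span_eq_top_of_span_map_eq_top (hπ : Function.Surjective π) {ι : Type*}
    [Fintype ι] {c : ℕ} {u : ι → Fin c → A} (hu : span K (Set.range fun i => π ∘ u i) = ⊤) :
    span A (Set.range u) = ⊤ := by
  refine top_le_iff.1 (le_of_le_smul_of_le_jacobson_bot Module.Finite.fg_top
    (maximalIdeal_le_jacobson ⊥) fun x _ => ?_)
  obtain ⟨a, ha⟩ := (mem_span_range_iff_exists_fun K).1 (hu ▸ mem_top : π ∘ x ∈ _)
  choose a' ha' using fun i => hπ (a i)
  set y := ∑ i, a' i • u i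
  have hxy : x - y ∈ maximalIdeal A • (⊤ : Submodule A (Fin c → A)) := mem_smul_top_pi fun j => by
    have hj : x j - y j ∈ RingHom.ker π := by
      rw [RingHom.mem_ker, map_sub, sub_eq_zero]
      change (π ∘ x) j = _
      rw [← ha]
      simp [y, ha']
    rw [ker_eq_maximalIdeal π hπ] at hj
    simpa using smul_mem_smul hj (mem_top (x := (1 : A)))
  rw [← add_sub_cancel y x]
  exact add_mem_sup (sum_mem fun i _ => smul_mem _ _ (subset_span ⟨i, rfl⟩)) hxy

theorem IsLocalRing.exists_span_sumElim_eq_top_of_linearIndependent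
    (hπ : Function.Surjective π) {n c : ℕ} {v : Fin n → Fin c → A}
    (hv : LinearIndependent K fun i => π ∘ v i) :
    ∃ w : Fin (c - n) → Fin c → A, span A (Set.range (Sum.elim v w)) = ⊤ := by
  set V := span K (Set.range fun i => π ∘ v i)
  obtain ⟨U, hVU⟩ := V.exists_isCompl
  have hU : Module.finrank K U = c - n := by
    have := finrank_add_eq_of_isCompl hVU
    rw [finrank_span_eq_card hv, Module.finrank_fin_fun, Fintype.card_fin] at this
    omega
  set b := Module.finBasisOfFinrankEq K U hU
  choose w hw using fun j i => hπ ((b j : Fin c → K) i)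
  refine ⟨w, span_eq_top_of_span_map_eq_top hπ (eq_top_iff.2 ?_)⟩
  have hbw : (fun j => (b j : Fin c → K)) = fun j => π ∘ w j :=
    funext fun j => funext fun i => (hw j i).symm
  rw [← hVU.sup_eq_top, ← (span_range_subtype_eq_top_iff U fun j => (b j).2).1 b.span_eq, hbw]
  exact sup_le (span_mono (Set.range_subset_iff.2 fun i => ⟨Sum.inl i, rfl⟩))
    (span_mono (Set.range_subset_iff.2 fun j => ⟨Sum.inr j, rfl⟩))

theorem IsLocalRing.nonempty_quotient_span_equiv_of_linearIndependent
    (hπ : Function.Surjective π) {n c : ℕ} {v : Fin n → Fin c → A}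
    (hv : LinearIndependent K fun i => π ∘ v i) :
    Nonempty (((Fin c → A) ⧸ span A (Set.range v)) ≃ₗ[A] (Fin (c - n) → A)) := by
  have hnc : n ≤ c := by simpa using hv.fintype_card_le_finrank
  obtain ⟨w, hw⟩ := exists_span_sumElim_eq_top_of_linearIndependent hπ hv
  exact nonempty_quotient_span_equiv_of_span_sumElim_eq_top (by omega) hw

end LocalRing

theorem stmt_18_general (R : Type) [CommRing R] [IsNoetherianRing R] [IsLocalRing R]
    (n : ℕ)
    (I : Ideal R) (hIle : I ≤ IsLocalRing.maximalIdeal R)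
    (q : Fin n → R) (hreg : RingTheory.Sequence.IsRegular R (List.ofFn q))
    (hQI : Ideal.span (Set.range q) ≤ I)
    (hred : I ^ 2 = Ideal.span (Set.range q) * I)
    (hfree : ∃ r : ℕ, Nonempty
      (subQuot R (Ideal.pow_le_self (two_ne_zero) : I ^ 2 ≤ I) ≃ₗ[R]
        (Fin r → R ⧸ I)))
    (c : ℕ) (hc : c = sInf {k : ℕ | ∃ g : Fin k → R, Ideal.span (Set.range g) = I}) :
    Nonempty (subQuot R hQI ≃ₗ[R] (Fin (c - n) → R ⧸ I)) := by
  obtain ⟨r, ⟨e⟩⟩ := hfree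
  have : Nontrivial (R ⧸ I) :=
    Ideal.Quotient.nontrivial_iff.2 (ne_top_of_le_ne_top (maximalIdeal.isMaximal R).ne_top hIle)
  have : IsLocalRing (R ⧸ I) := .of_surjective' _ Ideal.Quotient.mk_surjective
  set ρ : I →ₗ[R] (Fin r → R ⧸ I) := e.toLinearMap ∘ₗ mkQ _
  have hρ : Function.Surjective ρ := e.surjective.comp (mkQ_surjective _)
  have hker : LinearMap.ker ρ = I • ⊤ := by
    rw [LinearEquiv.ker_comp, ker_mkQ, range_inclusion, Ideal.smul_top_eq_comap_subtype_sq]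
  obtain rfl : r = c := hc ▸ (Ideal.sInf_card_span_eq_of_surjective
    (hIle.trans (maximalIdeal_le_jacobson ⊥)) hρ hker.le).symm
  set qI : Fin n → I := fun i => ⟨q i, hQI (Ideal.subset_span ⟨i, rfl⟩)⟩
  have hind := ρ.linearIndependent_factor_comp hIle hρ (hker.trans_le (smul_mono_left hIle))
    (y := qI) fun b hb => hreg.mem_maximalIdeal_of_sum_mul_mem hQI hred.le (by
      simpa [qI, mem_smul_top_iff, smul_eq_mul] using hb)
  let _ : Field (R ⧸ maximalIdeal R) := Ideal.Quotient.field _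
  obtain ⟨E⟩ := IsLocalRing.nonempty_quotient_span_equiv_of_linearIndependent
    (Ideal.Quotient.factor_surjective hIle) hind
  have hkerQ : LinearMap.ker ρ ≤ span R (Set.range qI) := by
    rw [← range_inclusion_span hQI, range_inclusion, hker, Ideal.smul_top_eq_comap_subtype_sq]
    exact comap_mono (hred.trans_le (Ideal.mul_le_left : Ideal.span (Set.range q) * I ≤ _))
  obtain ⟨F⟩ := nonempty_quotient_span_equiv_quotient_span
    (Ideal.Quotient.mk_surjective (I := I)) hρ hkerQ
  exact ⟨(quotEquivOfEq _ _ (range_inclusion_span hQI)).trans (F.trans (E.restrictScalars R))⟩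

/-- If `I` is an Ulrich ideal of a Cohen–Macaulay local ring `R` with reduction the
parameter ideal `Q` (so `I² = QI`) and `μ(I) − dim R ≥ 1`, then `I/Q` is a free
`R/I`-module of rank `μ(I) − dim R`. -/
theorem stmt_18 (R : Type) [CommRing R] [IsNoetherianRing R] [IsLocalRing R]
    (n : ℕ) (hdim : ringKrullDim R = n)
    (hCM : ∃ f : Fin n → R, (∀ j, f j ∈ IsLocalRing.maximalIdeal R) ∧
      RingTheory.Sequence.IsRegular R (List.ofFn f))
    (I : Ideal R) (hIle : I ≤ IsLocalRing.maximalIdeal R)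
    (hIprim : IsLocalRing.maximalIdeal R ≤ I.radical)
    (q : Fin n → R) (hreg : RingTheory.Sequence.IsRegular R (List.ofFn q))
    (hQprim : IsLocalRing.maximalIdeal R ≤ (Ideal.span (Set.range q)).radical)
    (hQI : Ideal.span (Set.range q) ≤ I)
    (hred : I ^ 2 = Ideal.span (Set.range q) * I)
    (hfree : ∃ r : ℕ, Nonempty
      (subQuot R (Ideal.pow_le_self (two_ne_zero) : I ^ 2 ≤ I) ≃ₗ[R]
        (Fin r → R ⧸ I)))
    (c : ℕ) (hc : c = sInf {k : ℕ | ∃ g : Fin k → R, Ideal.span (Set.range g) = I})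
    (hcn : 1 ≤ c - n) :
    Nonempty (subQuot R hQI ≃ₗ[R] (Fin (c - n) → R ⧸ I)) :=
  stmt_18_general R n I hIle q hreg hQI hred hfree c hc
end
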